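/- Let 0 < D < 1/96 and s ∈ ℝ, and set λ₁ = −1/(2D) and λ₂ = −1/(2D) − (1/(192D²))(1 − 1/(48D))^{−1} (so that λ₁ < λ₂ < 0). Consider the algebraic system for B₁ ≥ 0, B₂ ≥ 0: B₁·[ (1/2)(s + λ₁/6) + (5/224)(λ₁B₁² + 2λ₂B₂²) ] = 0 and B₂·[ (1/2)(s + λ₂/6) + (5/224)(2λ₁B₁² + λ₂B₂²) ] = 0. Then: (i) if s < −λ₂/6, the only nonnegative solution is (0,0); (ii) if −λ₂/6 < s < −λ₁/6, the nonnegative solutions are exactly (0,0) and (0, √(112(s + λ₂/6)/(−5λ₂))); (iii) if −λ₁/6 < s < (λ₂ − 2λ₁)/6, the nonnegative solutions are exactly (0,0), (√(112(s + λ₁/6)/(−5λ₁)), 0), and (0, √(112(s + λ₂/6)/(−5λ₂))); (iv) if s > (λ₂ − 2λ₁)/6, there are exactly four nonnegative solutions: the three from case (iii) together with the interior point (B₁,B₂) with B₁² = (2c₂ − c₁)/(−3λ₁) and B₂² = (2c₁ − c₂)/(−3λ₂), where cᵢ = (112/5)(s + λᵢ/6) for i = 1,2. -/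

import Mathlib

/-!
Each equation factors as `Bᵢ` times an affine function of `(B₁², B₂²)`, so an equilibrium is
trivial, lies on one axis, or solves a 2×2 linear system for `(B₁², B₂²)`. Each of these
branches is realised by a nonnegative `(B₁, B₂)` exactly when its radicands are nonnegative,
which is a linear condition on `s`; for `λ₁ < λ₂ < 0` the thresholds are ordered as
`(λ₁ - 2λ₂)/6 < -λ₂/6 < -λ₁/6 < (λ₂ - 2λ₁)/6`, giving the four regimes. The ordering of the
eigenvalues comes from `λ₂ = -1/(2D) + 1/(4D(1 - 48D))` and `2D < 4D(1 - 48D) ↔ D < 1/96`.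
-/

/-- Equilibrium condition of the two-spike amplitude modulation equations:
`B₁, B₂ ≥ 0` with
`B₁[ (1/2)(s + λ₁/6) + (5/224)(λ₁B₁² + 2λ₂B₂²) ] = 0` and
`B₂[ (1/2)(s + λ₂/6) + (5/224)(2λ₁B₁² + λ₂B₂²) ] = 0`. -/
def TwoSpikeEquilibrium (lam1 lam2 s B1 B2 : ℝ) : Prop :=
  0 ≤ B1 ∧ 0 ≤ B2 ∧
  B1 * ((1/2) * (s + lam1/6) + (5/224) * (lam1 * B1^2 + 2 * lam2 * B2^2)) = 0 ∧
  B2 * ((1/2) * (s + lam2/6) + (5/224) * (2 * lam1 * B1^2 + lam2 * B2^2)) = 0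

open Real

lemma two_spike_eigenvalue_gap_eq {D : ℝ} (hD : D ≠ 0) (h48 : 1 - 48 * D ≠ 0) :
    1 / (192 * D ^ 2) * (1 - 1 / (48 * D))⁻¹ = -1 / (4 * D * (1 - 48 * D)) := by
  have h48' : 48 * D - 1 ≠ 0 := fun h => h48 (by linarith)
  rw [one_sub_div (by positivity), inv_div, div_mul_div_comm,
    div_eq_div_iff (by positivity) (by positivity)]
  ring

lemma two_spike_eigenvalues_lt {D : ℝ} (hD1 : 0 < D) (hD2 : D < 1/96) :
    -1/(2*D) < -1/(2*D) - (1/(192*D^2)) * (1 - 1/(48*D))⁻¹ ∧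
      -1/(2*D) - (1/(192*D^2)) * (1 - 1/(48*D))⁻¹ < 0 := by
  have h2D : 0 < 2 * D := by positivity
  have hlt : 2 * D < 4 * D * (1 - 48 * D) := by nlinarith
  rw [two_spike_eigenvalue_gap_eq hD1.ne' (by linarith), neg_div, neg_div, sub_neg_eq_add]
  constructor
  · linarith [one_div_pos.mpr (h2D.trans hlt)]
  · linarith [one_div_lt_one_div_of_lt h2D hlt]

lemma nonneg_and_eq_sqrt_div_iff {a d B : ℝ} (hB : 0 ≤ B) (hd : 0 < d) :
    (0 ≤ a ∧ B = √(a / d)) ↔ B ^ 2 * d = a := by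
  constructor
  · rintro ⟨ha, rfl⟩
    rw [sq_sqrt (div_nonneg ha hd.le), div_mul_cancel₀ a hd.ne']
  · rintro rfl
    refine ⟨by positivity, ?_⟩
    rw [mul_div_cancel_right₀ _ hd.ne', sqrt_sq hB]

lemma twoSpikeEquilibrium_iff {lam1 lam2 s B1 B2 : ℝ} (h1 : lam1 < 0) (h2 : lam2 < 0) :
    TwoSpikeEquilibrium lam1 lam2 s B1 B2 ↔
      (B1 = 0 ∧ B2 = 0) ∨
      ((0 ≤ 112 * (s + lam1/6) ∧ B1 = √(112 * (s + lam1/6) / (-5 * lam1))) ∧ B2 = 0) ∨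
      (B1 = 0 ∧ (0 ≤ 112 * (s + lam2/6) ∧ B2 = √(112 * (s + lam2/6) / (-5 * lam2)))) ∨
      ((0 ≤ 2 * ((112/5) * (s + lam2/6)) - (112/5) * (s + lam1/6) ∧
          B1 = √((2 * ((112/5) * (s + lam2/6)) - (112/5) * (s + lam1/6)) / (-3 * lam1))) ∧
        (0 ≤ 2 * ((112/5) * (s + lam1/6)) - (112/5) * (s + lam2/6) ∧
          B2 = √((2 * ((112/5) * (s + lam1/6)) - (112/5) * (s + lam2/6)) / (-3 * lam2)))) := by
  have hd1 : 0 < -5 * lam1 := by linarith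
  have hd2 : 0 < -5 * lam2 := by linarith
  have hd1' : 0 < -3 * lam1 := by linarith
  have hd2' : 0 < -3 * lam2 := by linarith
  constructor
  · rintro ⟨hB1, hB2, e1, e2⟩
    rcases mul_eq_zero.mp e1 with rfl | e1 <;> rcases mul_eq_zero.mp e2 with rfl | e2
    · exact .inl ⟨rfl, rfl⟩
    · exact .inr <| .inr <| .inl
        ⟨rfl, (nonneg_and_eq_sqrt_div_iff hB2 hd2).mpr (by linear_combination (-224) * e2)⟩
    · exact .inr <| .inl
        ⟨(nonneg_and_eq_sqrt_div_iff hB1 hd1).mpr (by linear_combination (-224) * e1), rfl⟩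
    · exact .inr <| .inr <| .inr
        ⟨(nonneg_and_eq_sqrt_div_iff hB1 hd1').mpr
            (by linear_combination (224/5) * e1 - (448/5) * e2),
          (nonneg_and_eq_sqrt_div_iff hB2 hd2').mpr
            (by linear_combination (224/5) * e2 - (448/5) * e1)⟩
  · have sq_mul_of_eq_sqrt {a d B : ℝ} (hd : 0 < d) (h : 0 ≤ a ∧ B = √(a / d)) : B ^ 2 * d = a :=
      (nonneg_and_eq_sqrt_div_iff (h.2 ▸ sqrt_nonneg _) hd).mp h
    rintro (⟨rfl, rfl⟩ | ⟨h, rfl⟩ | ⟨rfl, h⟩ | ⟨h, h'⟩)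
    · exact ⟨le_rfl, le_rfl, by ring, by ring⟩
    · have := sq_mul_of_eq_sqrt hd1 h
      exact ⟨h.2 ▸ sqrt_nonneg _, le_rfl,
        mul_eq_zero_of_right _ (by linear_combination (-1/224) * this), by ring⟩
    · have := sq_mul_of_eq_sqrt hd2 h
      exact ⟨le_rfl, h.2 ▸ sqrt_nonneg _, by ring,
        mul_eq_zero_of_right _ (by linear_combination (-1/224) * this)⟩
    · have e1 := sq_mul_of_eq_sqrt hd1' h
      have e2 := sq_mul_of_eq_sqrt hd2' h'
      exact ⟨h.2 ▸ sqrt_nonneg _, h'.2 ▸ sqrt_nonneg _,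
        mul_eq_zero_of_right _ (by linear_combination (-5/672) * e1 - (5/336) * e2),
        mul_eq_zero_of_right _ (by linear_combination (-5/336) * e1 - (5/672) * e2)⟩

/-- Classification of the nonnegative equilibria of the two-spike amplitude
modulation equations in the four parameter ranges of `s = τ̂κ²`. -/
theorem stmt_19 (D s : ℝ) (hD1 : 0 < D) (hD2 : D < 1/96)
    (lam1 lam2 : ℝ)
    (hl1 : lam1 = -1/(2*D))
    (hl2 : lam2 = -1/(2*D) - (1/(192*D^2)) * (1 - 1/(48*D))⁻¹) :
    (lam1 < lam2 ∧ lam2 < 0) ∧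
    -- (i)
    (s < -lam2/6 →
      ∀ B1 B2 : ℝ, TwoSpikeEquilibrium lam1 lam2 s B1 B2 ↔ (B1 = 0 ∧ B2 = 0)) ∧
    -- (ii)
    (-lam2/6 < s → s < -lam1/6 →
      ∀ B1 B2 : ℝ, TwoSpikeEquilibrium lam1 lam2 s B1 B2 ↔
        ((B1 = 0 ∧ B2 = 0) ∨
         (B1 = 0 ∧ B2 = Real.sqrt (112 * (s + lam2/6) / (-5 * lam2))))) ∧
    -- (iii)
    (-lam1/6 < s → s < (lam2 - 2*lam1)/6 →
      ∀ B1 B2 : ℝ, TwoSpikeEquilibrium lam1 lam2 s B1 B2 ↔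
        ((B1 = 0 ∧ B2 = 0) ∨
         (B1 = Real.sqrt (112 * (s + lam1/6) / (-5 * lam1)) ∧ B2 = 0) ∨
         (B1 = 0 ∧ B2 = Real.sqrt (112 * (s + lam2/6) / (-5 * lam2))))) ∧
    -- (iv)
    ((lam2 - 2*lam1)/6 < s →
      ∀ B1 B2 : ℝ, TwoSpikeEquilibrium lam1 lam2 s B1 B2 ↔
        ((B1 = 0 ∧ B2 = 0) ∨
         (B1 = Real.sqrt (112 * (s + lam1/6) / (-5 * lam1)) ∧ B2 = 0) ∨
         (B1 = 0 ∧ B2 = Real.sqrt (112 * (s + lam2/6) / (-5 * lam2))) ∨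
         (B1 = Real.sqrt ((2 * ((112/5) * (s + lam2/6)) - (112/5) * (s + lam1/6)) / (-3 * lam1)) ∧
          B2 = Real.sqrt ((2 * ((112/5) * (s + lam1/6)) - (112/5) * (s + lam2/6)) / (-3 * lam2))))) := by
  obtain ⟨h12, h2⟩ : lam1 < lam2 ∧ lam2 < 0 := hl1 ▸ hl2 ▸ two_spike_eigenvalues_lt hD1 hD2
  have h1 : lam1 < 0 := h12.trans h2
  refine ⟨⟨h12, h2⟩, fun hs B1 B2 => ?_, fun hs hs' B1 B2 => ?_, fun hs hs' B1 B2 => ?_,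
    fun hs B1 B2 => ?_⟩ <;> rw [twoSpikeEquilibrium_iff h1 h2]
  · have hc1 : ¬ 0 ≤ 112 * (s + lam1/6) := by linarith
    have hc2 : ¬ 0 ≤ 112 * (s + lam2/6) := by linarith
    have hc3 : ¬ 0 ≤ 2 * ((112/5) * (s + lam1/6)) - (112/5) * (s + lam2/6) := by linarith
    simp only [hc1, hc2, hc3, false_and, and_false, or_false]
  · have hc1 : ¬ 0 ≤ 112 * (s + lam1/6) := by linarith
    have hc2 : 0 ≤ 112 * (s + lam2/6) := by linarith
    have hc3 : ¬ 0 ≤ 2 * ((112/5) * (s + lam1/6)) - (112/5) * (s + lam2/6) := by linarith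
    simp only [hc1, hc2, hc3, true_and, false_and, and_false, or_false, false_or]
  · have hc1 : 0 ≤ 112 * (s + lam1/6) := by linarith
    have hc2 : 0 ≤ 112 * (s + lam2/6) := by linarith
    have hc3 : ¬ 0 ≤ 2 * ((112/5) * (s + lam1/6)) - (112/5) * (s + lam2/6) := by linarith
    simp only [hc1, hc2, hc3, true_and, false_and, and_false, or_false]
  · have hc1 : 0 ≤ 112 * (s + lam1/6) := by linarith
    have hc2 : 0 ≤ 112 * (s + lam2/6) := by linarith
    have hc3 : 0 ≤ 2 * ((112/5) * (s + lam2/6)) - (112/5) * (s + lam1/6) := by linarith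
    have hc4 : 0 ≤ 2 * ((112/5) * (s + lam1/6)) - (112/5) * (s + lam2/6) := by linarith
    simp only [hc1, hc2, hc3, hc4, true_and]
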